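/- Under assumptions (A1)–(A4) with μ > 2, for every (f1,f2), (g1,g2) ∈ 𝒦 and every η ∈ [s0,r0] one has |Φ1(η; f1,f2) − Φ1(η; g1,g2)| ≤ Φ̃1·‖(f1,f2) − (g1,g2)‖, where Φ̃1 = Ẽ1/(L1m·(μ+ν−1)·s0^(μ+ν−1)) + L̃1/(L1m²·(2μ+ν−1)·s0^(2μ+ν−1)), Ẽ1 = 2a·[Ñ1/(L1m·(μ−2)·s0^(μ−2)) + N1M·L̃1/(L1m²·(3μ−2)·s0^(3μ−2))] + D1·[K̃1/(H_inf·L1m·(2μ+ν−1)·s0^(2μ+ν−1)) + (K1M/(H_inf·L1m))·(H̃/(H_inf·(2μ+ν−1)·s0^(2μ+ν−1)) + L̃1/(L1m·(3μ+ν−1)·s0^(3μ+ν−1)))], H_inf = (K1m/(μ+ν−1))·(s0^(−(μ+ν−1)) − r0^(−(μ+ν−1))), and H̃ = (K̃1·s0^(−(μ+ν−1)) + K̃2·r0^(−(μ+ν−1)))/(μ+ν−1). -/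

import Mathlib

open MeasureTheory Filter Topology

noncomputable section

/-- The bundle of fixed constants of the problem. -/
structure Cst where
  nu : ℝ
  mu : ℝ
  a : ℝ
  D1 : ℝ
  D2 : ℝ
  Q : ℝ
  D1s : ℝ
  D2s : ℝ
  L1m : ℝ
  L1M : ℝ
  N1m : ℝ
  N1M : ℝ
  K1m : ℝ
  K1M : ℝ
  L2m : ℝ
  L2M : ℝ
  N2m : ℝ
  N2M : ℝ
  K2m : ℝ
  K2M : ℝ
  Lt1 : ℝ
  Nt1 : ℝ
  Kt1 : ℝ
  Lt2 : ℝ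
  Nt2 : ℝ
  Kt2 : ℝ

/-- The space `C[s0,r0]`, modeled as real functions continuous on `[s0,r0]`. -/
def C1 (s0 r0 : ℝ) : Set (ℝ → ℝ) := {f | ContinuousOn f (Set.Icc s0 r0)}

/-- The set `ℳ ⊆ C_b[r0,∞)`: bounded continuous functions on `[r0,∞)` with
`f(r0) = 0` and `f(η) → -1` as `η → ∞`. -/
def Mset (r0 : ℝ) : Set (ℝ → ℝ) :=
  {f | ContinuousOn f (Set.Ici r0) ∧ (∃ C, ∀ x ∈ Set.Ici r0, |f x| ≤ C) ∧
    f r0 = 0 ∧ Tendsto f atTop (𝓝 (-1))}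

/-- Sup norm of `f` over the set `S`. -/
def supOn (S : Set ℝ) (f : ℝ → ℝ) : ℝ := ⨆ x : S, |f x.1|

/-- Norm of the difference of two pairs in `𝒦 = C[s0,r0] × ℳ`. -/
def pairNorm (s0 r0 : ℝ) (f1 f2 g1 g2 : ℝ → ℝ) : ℝ :=
  max (supOn (Set.Icc s0 r0) (f1 - g1)) (supOn (Set.Ici r0) (f2 - g2))

/-- Positivity assumptions on all the fixed constants and on `s0, r0`. -/
def PosC (c : Cst) (s0 r0 : ℝ) : Prop :=
  0 < c.a ∧ 0 < c.nu ∧ c.nu < 1 ∧ 2 < c.mu ∧ 0 < s0 ∧ s0 < r0 ∧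
  0 < c.D1 ∧ 0 < c.D2 ∧ 0 < c.Q ∧ 0 < c.D1s ∧ 0 < c.D2s ∧
  0 < c.L1m ∧ 0 < c.L1M ∧ 0 < c.N1m ∧ 0 < c.N1M ∧ 0 < c.K1m ∧ 0 < c.K1M ∧
  0 < c.L2m ∧ 0 < c.L2M ∧ 0 < c.N2m ∧ 0 < c.N2M ∧ 0 < c.K2m ∧ 0 < c.K2M ∧
  0 < c.Lt1 ∧ 0 < c.Nt1 ∧ 0 < c.Kt1 ∧ 0 < c.Lt2 ∧ 0 < c.Nt2 ∧ 0 < c.Kt2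

/-- Positivity assumptions on all the fixed constants (no `s0, r0`). -/
def PosCst (c : Cst) : Prop :=
  0 < c.a ∧ 0 < c.nu ∧ c.nu < 1 ∧ 2 < c.mu ∧
  0 < c.D1 ∧ 0 < c.D2 ∧ 0 < c.Q ∧ 0 < c.D1s ∧ 0 < c.D2s ∧
  0 < c.L1m ∧ 0 < c.L1M ∧ 0 < c.N1m ∧ 0 < c.N1M ∧ 0 < c.K1m ∧ 0 < c.K1M ∧
  0 < c.L2m ∧ 0 < c.L2M ∧ 0 < c.N2m ∧ 0 < c.N2M ∧ 0 < c.K2m ∧ 0 < c.K2M ∧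
  0 < c.Lt1 ∧ 0 < c.Nt1 ∧ 0 < c.Kt1 ∧ 0 < c.Lt2 ∧ 0 < c.Nt2 ∧ 0 < c.Kt2

/-- Assumptions (A1)–(A4): continuity of the images of `L, N, K`, the two-sided
bounds and the Lipschitz bounds. -/
def Assum (c : Cst) (s0 r0 : ℝ) (L1 N1 K1 L2 N2 K2 : (ℝ → ℝ) → ℝ → ℝ) : Prop :=
  (∀ f1 ∈ C1 s0 r0,
    ContinuousOn (L1 f1) (Set.Icc s0 r0) ∧ ContinuousOn (N1 f1) (Set.Icc s0 r0) ∧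
      ContinuousOn (K1 f1) (Set.Icc s0 r0)) ∧
  (∀ f2 ∈ Mset r0,
    ContinuousOn (L2 f2) (Set.Ici r0) ∧ ContinuousOn (N2 f2) (Set.Ici r0) ∧
      ContinuousOn (K2 f2) (Set.Ici r0)) ∧
  (∀ f1 ∈ C1 s0 r0, ∀ η ∈ Set.Icc s0 r0,
    c.L1m * η ^ c.mu ≤ L1 f1 η ∧ L1 f1 η ≤ c.L1M * η ^ c.mu ∧
    c.N1m * η ^ (-c.mu) ≤ N1 f1 η ∧ N1 f1 η ≤ c.N1M * η ^ (-c.mu) ∧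
    c.K1m * η ^ (-c.mu) ≤ K1 f1 η ∧ K1 f1 η ≤ c.K1M * η ^ (-c.mu)) ∧
  (∀ f2 ∈ Mset r0, ∀ η ∈ Set.Ici r0,
    c.L2m * η ^ c.mu ≤ L2 f2 η ∧ L2 f2 η ≤ c.L2M * η ^ c.mu ∧
    c.N2m * η ^ (-c.mu) ≤ N2 f2 η ∧ N2 f2 η ≤ c.N2M * η ^ (-c.mu) ∧
    c.K2m * η ^ (-c.mu) ≤ K2 f2 η ∧ K2 f2 η ≤ c.K2M * η ^ (-c.mu)) ∧
  (∀ f1 ∈ C1 s0 r0, ∀ g1 ∈ C1 s0 r0, ∀ η ∈ Set.Icc s0 r0,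
    |L1 f1 η - L1 g1 η| ≤ c.Lt1 * supOn (Set.Icc s0 r0) (f1 - g1) ∧
    |N1 f1 η - N1 g1 η| ≤ c.Nt1 * supOn (Set.Icc s0 r0) (f1 - g1) ∧
    |K1 f1 η - K1 g1 η| ≤ c.Kt1 * η ^ (-c.mu) * supOn (Set.Icc s0 r0) (f1 - g1)) ∧
  (∀ f2 ∈ Mset r0, ∀ g2 ∈ Mset r0, ∀ η ∈ Set.Ici r0,
    |L2 f2 η - L2 g2 η| ≤ c.Lt2 * supOn (Set.Ici r0) (f2 - g2) ∧
    |N2 f2 η - N2 g2 η| ≤ c.Nt2 * supOn (Set.Ici r0) (f2 - g2) ∧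
    |K2 f2 η - K2 g2 η| ≤ c.Kt2 * η ^ (-c.mu) * supOn (Set.Ici r0) (f2 - g2))

/-- `H(f1,f2) = ∫_{s0}^{r0} K(f1)(v)/v^ν dv + ∫_{r0}^{∞} K(f2)(v)/v^ν dv`. -/
def Hf (c : Cst) (s0 r0 : ℝ) (L1 N1 K1 L2 N2 K2 : (ℝ → ℝ) → ℝ → ℝ) (f1 f2 : ℝ → ℝ) : ℝ :=
  (∫ v in s0..r0, K1 f1 v / v ^ c.nu) + ∫ v in Set.Ioi r0, K2 f2 v / v ^ c.nu

/-- `E1(η; f1,f2)`. -/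
def E1f (c : Cst) (s0 r0 : ℝ) (L1 N1 K1 L2 N2 K2 : (ℝ → ℝ) → ℝ → ℝ) (f1 f2 : ℝ → ℝ)
    (η : ℝ) : ℝ :=
  Real.exp (-(∫ v in s0..η,
    (2 * c.a * v * (N1 f1 v / L1 f1 v)
      + c.D1 / Hf c s0 r0 L1 N1 K1 L2 N2 K2 f1 f2 * (K1 f1 v / (L1 f1 v * v ^ c.nu)))))

/-- `Φ1(η; f1,f2)`. -/
def Phi1f (c : Cst) (s0 r0 : ℝ) (L1 N1 K1 L2 N2 K2 : (ℝ → ℝ) → ℝ → ℝ) (f1 f2 : ℝ → ℝ)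
    (η : ℝ) : ℝ :=
  ∫ v in s0..η, E1f c s0 r0 L1 N1 K1 L2 N2 K2 f1 f2 v / (L1 f1 v * v ^ c.nu)

/-- `H1(η; f1,f2)`. -/
def H1f (c : Cst) (s0 r0 : ℝ) (L1 N1 K1 L2 N2 K2 : (ℝ → ℝ) → ℝ → ℝ) (f1 f2 : ℝ → ℝ)
    (η : ℝ) : ℝ :=
  ∫ v in s0..η, K1 f1 v / (v ^ c.nu * E1f c s0 r0 L1 N1 K1 L2 N2 K2 f1 f2 v)

/-- `G1(η; f1,f2)`. -/
def G1f (c : Cst) (s0 r0 : ℝ) (L1 N1 K1 L2 N2 K2 : (ℝ → ℝ) → ℝ → ℝ) (f1 f2 : ℝ → ℝ)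
    (η : ℝ) : ℝ :=
  ∫ v in s0..η, E1f c s0 r0 L1 N1 K1 L2 N2 K2 f1 f2 v
    * H1f c s0 r0 L1 N1 K1 L2 N2 K2 f1 f2 v / (L1 f1 v * v ^ c.nu)

/-- `V1(f1,f2)(η)`. -/
def V1f (c : Cst) (s0 r0 : ℝ) (L1 N1 K1 L2 N2 K2 : (ℝ → ℝ) → ℝ → ℝ) (f1 f2 : ℝ → ℝ)
    (η : ℝ) : ℝ :=
  s0 ^ c.nu * c.Q * Real.exp (-s0 ^ 2)
      * (Phi1f c s0 r0 L1 N1 K1 L2 N2 K2 f1 f2 r0 - Phi1f c s0 r0 L1 N1 K1 L2 N2 K2 f1 f2 η)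
    + c.D1s / Hf c s0 r0 L1 N1 K1 L2 N2 K2 f1 f2 ^ 2
      * (G1f c s0 r0 L1 N1 K1 L2 N2 K2 f1 f2 r0 - G1f c s0 r0 L1 N1 K1 L2 N2 K2 f1 f2 η)

/-- `E2(η; f1,f2)`. -/
def E2f (c : Cst) (s0 r0 : ℝ) (L1 N1 K1 L2 N2 K2 : (ℝ → ℝ) → ℝ → ℝ) (f1 f2 : ℝ → ℝ)
    (η : ℝ) : ℝ :=
  Real.exp (-(∫ v in r0..η,
    (2 * c.a * v * (N2 f2 v / L2 f2 v)
      + c.D2 / Hf c s0 r0 L1 N1 K1 L2 N2 K2 f1 f2 * (K2 f2 v / (L2 f2 v * v ^ c.nu)))))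

/-- `Φ2(η; f1,f2)`. -/
def Phi2f (c : Cst) (s0 r0 : ℝ) (L1 N1 K1 L2 N2 K2 : (ℝ → ℝ) → ℝ → ℝ) (f1 f2 : ℝ → ℝ)
    (η : ℝ) : ℝ :=
  ∫ v in r0..η, E2f c s0 r0 L1 N1 K1 L2 N2 K2 f1 f2 v / (L2 f2 v * v ^ c.nu)

/-- `Φ2(∞; f1,f2)`. -/
def Phi2I (c : Cst) (s0 r0 : ℝ) (L1 N1 K1 L2 N2 K2 : (ℝ → ℝ) → ℝ → ℝ) (f1 f2 : ℝ → ℝ) : ℝ :=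
  ∫ v in Set.Ioi r0, E2f c s0 r0 L1 N1 K1 L2 N2 K2 f1 f2 v / (L2 f2 v * v ^ c.nu)

/-- `H2(η; f1,f2)`. -/
def H2f (c : Cst) (s0 r0 : ℝ) (L1 N1 K1 L2 N2 K2 : (ℝ → ℝ) → ℝ → ℝ) (f1 f2 : ℝ → ℝ)
    (η : ℝ) : ℝ :=
  ∫ v in r0..η, K2 f2 v / (v ^ c.nu * E2f c s0 r0 L1 N1 K1 L2 N2 K2 f1 f2 v)

/-- `G2(η; f1,f2)`. -/
def G2f (c : Cst) (s0 r0 : ℝ) (L1 N1 K1 L2 N2 K2 : (ℝ → ℝ) → ℝ → ℝ) (f1 f2 : ℝ → ℝ)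
    (η : ℝ) : ℝ :=
  ∫ v in r0..η, E2f c s0 r0 L1 N1 K1 L2 N2 K2 f1 f2 v
    * H2f c s0 r0 L1 N1 K1 L2 N2 K2 f1 f2 v / (L2 f2 v * v ^ c.nu)

/-- `G2(∞; f1,f2) = lim_{η→∞} G2(η; f1,f2)`. -/
def G2I (c : Cst) (s0 r0 : ℝ) (L1 N1 K1 L2 N2 K2 : (ℝ → ℝ) → ℝ → ℝ) (f1 f2 : ℝ → ℝ) : ℝ :=
  limUnder atTop (G2f c s0 r0 L1 N1 K1 L2 N2 K2 f1 f2)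

/-- `V2(f1,f2)(η)`. -/
def V2f (c : Cst) (s0 r0 : ℝ) (L1 N1 K1 L2 N2 K2 : (ℝ → ℝ) → ℝ → ℝ) (f1 f2 : ℝ → ℝ)
    (η : ℝ) : ℝ :=
  (c.D2s / Hf c s0 r0 L1 N1 K1 L2 N2 K2 f1 f2 ^ 2 * G2I c s0 r0 L1 N1 K1 L2 N2 K2 f1 f2 - 1)
      * (Phi2f c s0 r0 L1 N1 K1 L2 N2 K2 f1 f2 η / Phi2I c s0 r0 L1 N1 K1 L2 N2 K2 f1 f2)
    - c.D2s / Hf c s0 r0 L1 N1 K1 L2 N2 K2 f1 f2 ^ 2 * G2f c s0 r0 L1 N1 K1 L2 N2 K2 f1 f2 η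

/-! Constants appearing in the estimates. -/

def Hinf (c : Cst) (s0 r0 : ℝ) : ℝ :=
  c.K1m / (c.mu + c.nu - 1) * (s0 ^ (-(c.mu + c.nu - 1)) - r0 ^ (-(c.mu + c.nu - 1)))

def Hsup (c : Cst) (s0 r0 : ℝ) : ℝ :=
  (c.K1M * s0 ^ (-(c.mu + c.nu - 1)) + c.K2M * r0 ^ (-(c.mu + c.nu - 1))) / (c.mu + c.nu - 1)

def Htil (c : Cst) (s0 r0 : ℝ) : ℝ :=
  (c.Kt1 * s0 ^ (-(c.mu + c.nu - 1)) + c.Kt2 * r0 ^ (-(c.mu + c.nu - 1))) / (c.mu + c.nu - 1)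

/-- Limit of `Hinf` as `r0 → ∞`. -/
def HinfI (c : Cst) (s0 : ℝ) : ℝ := c.K1m / (c.mu + c.nu - 1) * s0 ^ (-(c.mu + c.nu - 1))

/-- Limit of `Hsup` as `r0 → ∞`. -/
def HsupI (c : Cst) (s0 : ℝ) : ℝ := c.K1M * s0 ^ (-(c.mu + c.nu - 1)) / (c.mu + c.nu - 1)

/-- Limit of `Htil` as `r0 → ∞`. -/
def HtilI (c : Cst) (s0 : ℝ) : ℝ := c.Kt1 * s0 ^ (-(c.mu + c.nu - 1)) / (c.mu + c.nu - 1)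

/-- `E1inf` as a function of the value `h` of `Hinf`. -/
def E1infG (c : Cst) (s0 h : ℝ) : ℝ :=
  Real.exp (-(c.a * c.N1M / (c.L1m * (c.mu - 1) * s0 ^ (2 * c.mu - 2))
    + c.D1 * c.K1M / (h * c.L1m * (2 * c.mu + c.nu - 1) * s0 ^ (2 * c.mu + c.nu - 1))))

/-- `Ẽ1` as a function of the values `h` of `Hinf` and `ht` of `Htil`. -/
def E1tilG (c : Cst) (s0 h ht : ℝ) : ℝ :=
  2 * c.a * (c.Nt1 / (c.L1m * (c.mu - 2) * s0 ^ (c.mu - 2))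
      + c.N1M * c.Lt1 / (c.L1m ^ 2 * (3 * c.mu - 2) * s0 ^ (3 * c.mu - 2)))
    + c.D1 * (c.Kt1 / (h * c.L1m * (2 * c.mu + c.nu - 1) * s0 ^ (2 * c.mu + c.nu - 1))
      + c.K1M / (h * c.L1m)
        * (ht / (h * (2 * c.mu + c.nu - 1) * s0 ^ (2 * c.mu + c.nu - 1))
          + c.Lt1 / (c.L1m * (3 * c.mu + c.nu - 1) * s0 ^ (3 * c.mu + c.nu - 1))))

def Phi1tilG (c : Cst) (s0 h ht : ℝ) : ℝ :=
  E1tilG c s0 h ht / (c.L1m * (c.mu + c.nu - 1) * s0 ^ (c.mu + c.nu - 1))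
    + c.Lt1 / (c.L1m ^ 2 * (2 * c.mu + c.nu - 1) * s0 ^ (2 * c.mu + c.nu - 1))

def H1supG (c : Cst) (s0 h : ℝ) : ℝ :=
  c.K1M / (E1infG c s0 h * (c.mu + c.nu - 1) * s0 ^ (c.mu + c.nu - 1))

def H1tilG (c : Cst) (s0 h ht : ℝ) : ℝ :=
  (c.Kt1 + c.K1M * E1tilG c s0 h ht / E1infG c s0 h)
    / (E1infG c s0 h * (c.mu + c.nu - 1) * s0 ^ (c.mu + c.nu - 1))

def G1supG (c : Cst) (s0 h : ℝ) : ℝ :=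
  H1supG c s0 h / (c.L1m * (c.mu + c.nu - 1) * s0 ^ (c.mu + c.nu - 1))

def G1tilG (c : Cst) (s0 h ht : ℝ) : ℝ :=
  H1supG c s0 h * Phi1tilG c s0 h ht
    + H1tilG c s0 h ht / (c.L1m * (c.mu + c.nu - 1) * s0 ^ (c.mu + c.nu - 1))

/-- `ε1` as a function of the values `h` of `Hinf`, `hs` of `Hsup`, `ht` of `Htil`. -/
def eps1G (c : Cst) (s0 h hs ht : ℝ) : ℝ :=
  2 * s0 ^ c.nu * c.Q * Real.exp (-s0 ^ 2) * Phi1tilG c s0 h ht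
    + 2 * c.D1s * (2 * G1supG c s0 h * hs * ht / h ^ 4 + G1tilG c s0 h ht / h ^ 2)

def E1inf (c : Cst) (s0 r0 : ℝ) : ℝ := E1infG c s0 (Hinf c s0 r0)
def E1til (c : Cst) (s0 r0 : ℝ) : ℝ := E1tilG c s0 (Hinf c s0 r0) (Htil c s0 r0)
def Phi1til (c : Cst) (s0 r0 : ℝ) : ℝ := Phi1tilG c s0 (Hinf c s0 r0) (Htil c s0 r0)
def H1sup (c : Cst) (s0 r0 : ℝ) : ℝ := H1supG c s0 (Hinf c s0 r0)
def H1til (c : Cst) (s0 r0 : ℝ) : ℝ := H1tilG c s0 (Hinf c s0 r0) (Htil c s0 r0)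
def G1sup (c : Cst) (s0 r0 : ℝ) : ℝ := G1supG c s0 (Hinf c s0 r0)
def G1til (c : Cst) (s0 r0 : ℝ) : ℝ := G1tilG c s0 (Hinf c s0 r0) (Htil c s0 r0)
def eps1 (c : Cst) (s0 r0 : ℝ) : ℝ := eps1G c s0 (Hinf c s0 r0) (Hsup c s0 r0) (Htil c s0 r0)

/-- `j1(s0) = lim_{r0→∞} ε1(r0,s0)`: the same expression with `Hinf, Hsup, Htil`
replaced by their limits as `r0 → ∞`. -/
def j1 (c : Cst) (s0 : ℝ) : ℝ := eps1G c s0 (HinfI c s0) (HsupI c s0) (HtilI c s0)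

def E2inf (c : Cst) (s0 r0 : ℝ) : ℝ :=
  Real.exp (-(c.a * c.N2M / (c.L2m * (c.mu - 1) * r0 ^ (2 * c.mu - 2))
    + c.D2 * c.K2M / (Hinf c s0 r0 * c.L2m * (2 * c.mu + c.nu - 1) * r0 ^ (2 * c.mu + c.nu - 1))))

def E2til (c : Cst) (s0 r0 : ℝ) : ℝ :=
  2 * c.a * (c.Nt2 / (c.L2m * (c.mu - 2) * r0 ^ (c.mu - 2))
      + c.N2M * c.Lt2 / (c.L2m ^ 2 * (3 * c.mu - 2) * r0 ^ (3 * c.mu - 2)))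
    + c.D2 * (c.Kt2 / (Hinf c s0 r0 * c.L2m * (2 * c.mu + c.nu - 1) * r0 ^ (2 * c.mu + c.nu - 1))
      + c.K2M / (Hinf c s0 r0 * c.L2m)
        * (Htil c s0 r0 / (Hinf c s0 r0 * (2 * c.mu + c.nu - 1) * r0 ^ (2 * c.mu + c.nu - 1))
          + c.Lt2 / (c.L2m * (3 * c.mu + c.nu - 1) * r0 ^ (3 * c.mu + c.nu - 1))))

def Phi2til (c : Cst) (s0 r0 : ℝ) : ℝ :=
  E2til c s0 r0 / (c.L2m * (c.mu + c.nu - 1) * r0 ^ (c.mu + c.nu - 1))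
    + c.Lt2 / (c.L2m ^ 2 * (2 * c.mu + c.nu - 1) * r0 ^ (2 * c.mu + c.nu - 1))

/-- `Φ2inf(∞)(r0,s0)`. -/
def Phi2infC (c : Cst) (s0 r0 : ℝ) : ℝ :=
  E2inf c s0 r0 / (c.L2M * (c.mu + c.nu - 1) * r0 ^ (c.mu + c.nu - 1))

/-- `Φ2sup(r0)`. -/
def Phi2supC (c : Cst) (r0 : ℝ) : ℝ := 1 / (c.L2m * (c.mu + c.nu - 1) * r0 ^ (c.mu + c.nu - 1))

def H2sup (c : Cst) (s0 r0 : ℝ) : ℝ :=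
  c.K2M / (E2inf c s0 r0 * (c.mu + c.nu - 1) * r0 ^ (c.mu + c.nu - 1))

def H2til (c : Cst) (s0 r0 : ℝ) : ℝ :=
  (c.Kt2 + c.K2M * E2til c s0 r0 / E2inf c s0 r0)
    / (E2inf c s0 r0 * (c.mu + c.nu - 1) * r0 ^ (c.mu + c.nu - 1))

def G2sup (c : Cst) (s0 r0 : ℝ) : ℝ :=
  H2sup c s0 r0 / (c.L2m * (c.mu + c.nu - 1) * r0 ^ (c.mu + c.nu - 1))

def G2til (c : Cst) (s0 r0 : ℝ) : ℝ :=
  H2sup c s0 r0 * Phi2til c s0 r0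
    + H2til c s0 r0 / (c.L2m * (c.mu + c.nu - 1) * r0 ^ (c.mu + c.nu - 1))

def eps21 (c : Cst) (s0 r0 : ℝ) : ℝ := 2 * Phi2til c s0 r0 / Phi2infC c s0 r0

def eps22 (c : Cst) (s0 r0 : ℝ) : ℝ :=
  G2til c s0 r0 / Hinf c s0 r0 ^ 2
    + 2 * G2sup c s0 r0 * Hsup c s0 r0 * Htil c s0 r0 / Hinf c s0 r0 ^ 4

def eps23 (c : Cst) (s0 r0 : ℝ) : ℝ :=
  Phi2supC c r0 / Phi2infC c s0 r0 * eps22 c s0 r0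
    + G2sup c s0 r0 / Hinf c s0 r0 ^ 2 * eps21 c s0 r0

def eps2 (c : Cst) (s0 r0 : ℝ) : ℝ := eps21 c s0 r0 + eps22 c s0 r0 + eps23 c s0 r0



/-!
On `[s0, r0]`, (A1) gives `L(f1)(v) ≥ L1m v^μ` and `N, K ≤ const · v^(-μ)`, and (A1), (A2) give
`H(f1,f2) ≥ H_inf > 0`. With these lower bounds on the denominators, (A3) and (A4) bound the
difference of the exponents of `E1` pointwise by `‖(f1,f2) − (g1,g2)‖` times a sum of negative
powers of `v`, whose integral over `[s0, ∞)` is `Ẽ1`. Both exponents are nonnegative and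
`exp (-·)` is 1-Lipschitz on `[0, ∞)`, so `|E1(f) − E1(g)| ≤ Ẽ1 ‖(f1,f2) − (g1,g2)‖`. Writing the
integrand of `Φ1` as `(E1 / L) / v^ν` and using `E1 ≤ 1` gives a second pointwise bound by negative
powers of `v`, whose integral is `Φ̃1`.
-/

open Set

theorem abs_exp_neg_sub_exp_neg_le {x y : ℝ} (hx : 0 ≤ x) (hy : 0 ≤ y) :
    |Real.exp (-x) - Real.exp (-y)| ≤ |x - y| := by
  wlog hyx : y ≤ x generalizing x y
  · rw [abs_sub_comm, abs_sub_comm x]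
    exact this hy hx (le_of_not_ge hyx)
  have hmono : Real.exp (-x) ≤ Real.exp (-y) := Real.exp_le_exp.mpr (by linarith)
  rw [abs_sub_comm, abs_of_nonneg (sub_nonneg.mpr hmono), abs_of_nonneg (sub_nonneg.mpr hyx)]
  calc Real.exp (-y) - Real.exp (-x) = Real.exp (-y) * (1 - Real.exp (-(x - y))) := by
        rw [mul_sub, ← Real.exp_add]; ring_nf
    _ ≤ 1 - Real.exp (-(x - y)) :=
        mul_le_of_le_one_left (sub_nonneg.mpr (Real.exp_le_one_iff.mpr (by linarith)))
          (Real.exp_le_one_iff.mpr (neg_nonpos.mpr hy))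
    _ ≤ x - y := by linarith [Real.one_sub_le_exp_neg (x - y)]

theorem abs_div_sub_div_le_of_le {a b c d m α β γ : ℝ} (hm : 0 < m) (hb : m ≤ b) (hd : m ≤ d)
    (hac : |a - c| ≤ α) (hbd : |b - d| ≤ β) (hc : |c| ≤ γ) :
    |a / b - c / d| ≤ α / m + γ * β / m ^ 2 := by
  have hb0 : 0 < b := hm.trans_le hb
  have hd0 : 0 < d := hm.trans_le hd
  have hsplit : a / b - c / d = (a - c) / b + c * (d - b) / (b * d) := by
    field_simp; ring
  calc |a / b - c / d| ≤ |a - c| / b + |c| * |b - d| / (b * d) := by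
        refine hsplit ▸ (abs_add_le _ _).trans (le_of_eq ?_)
        rw [abs_div, abs_div, abs_mul, abs_of_pos hb0, abs_of_pos (mul_pos hb0 hd0),
          abs_sub_comm d b]
    _ ≤ α / m + γ * β / m ^ 2 := by
        have hγ : 0 ≤ γ := (abs_nonneg c).trans hc
        have hα : 0 ≤ α := (abs_nonneg _).trans hac
        have hβ : 0 ≤ β := (abs_nonneg _).trans hbd
        rw [sq]
        gcongr

theorem abs_div_mul_sub_div_mul_le_of_le {k k' H H' L L' h m κ θ l γ : ℝ} (hh : 0 < h)
    (hH : h ≤ H) (hH' : h ≤ H') (hm : 0 < m) (hL : m ≤ L) (hL' : m ≤ L')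
    (hk : |k - k'| ≤ κ) (hHH : |H - H'| ≤ θ) (hLL : |L - L'| ≤ l) (hk' : |k'| ≤ γ) :
    |k / (H * L) - k' / (H' * L')| ≤ κ / (h * m) + γ * θ / (h ^ 2 * m) + γ * l / (h * m ^ 2) := by
  have hH0 : 0 < H := hh.trans_le hH
  have hH0' : 0 < H' := hh.trans_le hH'
  have hL0 : 0 < L := hm.trans_le hL
  have hL0' : 0 < L' := hm.trans_le hL'
  have hsplit : k / (H * L) - k' / (H' * L') = (k - k') / (H * L)
      + k' * (H' - H) / (H * H' * L) + k' * (L' - L) / (H' * L * L') := by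
    field_simp; ring
  calc |k / (H * L) - k' / (H' * L')| ≤ |k - k'| / (H * L)
        + |k'| * |H - H'| / (H * H' * L) + |k'| * |L - L'| / (H' * L * L') := by
        rw [hsplit]
        refine (abs_add_three _ _ _).trans (le_of_eq ?_)
        rw [abs_div, abs_div, abs_div, abs_of_pos (mul_pos hH0 hL0),
          abs_of_pos (mul_pos (mul_pos hH0 hH0') hL0), abs_of_pos (mul_pos (mul_pos hH0' hL0) hL0'),
          abs_mul, abs_mul, abs_sub_comm H', abs_sub_comm L']
    _ ≤ κ / (h * m) + γ * θ / (h ^ 2 * m) + γ * l / (h * m ^ 2) := by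
        have hγ : 0 ≤ γ := (abs_nonneg k').trans hk'
        have hκ : 0 ≤ κ := (abs_nonneg _).trans hk
        have hθ : 0 ≤ θ := (abs_nonneg _).trans hHH
        have hl : 0 ≤ l := (abs_nonneg _).trans hLL
        rw [sq, sq, ← mul_assoc]
        gcongr

theorem rpow_sub_natCast_mul {v : ℝ} (hv : 0 < v) (b a : ℝ) (k : ℕ) :
    v ^ (b - k * a) = v ^ b * ((v ^ a)⁻¹) ^ k := by
  rw [Real.rpow_sub hv, mul_comm (k : ℝ) a, Real.rpow_mul_natCast hv.le, div_eq_mul_inv, inv_pow]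

theorem abs_intervalIntegral_sub_le {F G B : ℝ → ℝ} {a b : ℝ} (hab : a ≤ b)
    (hF : IntervalIntegrable F volume a b) (hG : IntervalIntegrable G volume a b)
    (hB : IntervalIntegrable B volume a b) (hFG : ∀ x ∈ Icc a b, |F x - G x| ≤ B x) :
    |(∫ x in a..b, F x) - ∫ x in a..b, G x| ≤ ∫ x in a..b, B x := by
  rw [← intervalIntegral.integral_sub hF hG]
  exact (intervalIntegral.abs_integral_le_integral_abs hab).trans
    (intervalIntegral.integral_mono_on hab (hF.sub hG).abs hB hFG)

theorem abs_setIntegral_sub_le {α : Type*} [MeasurableSpace α] {μ : Measure α}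
    {F G B : α → ℝ} {s : Set α} (hs : MeasurableSet s) (hF : IntegrableOn F s μ)
    (hG : IntegrableOn G s μ) (hB : IntegrableOn B s μ) (hFG : ∀ x ∈ s, |F x - G x| ≤ B x) :
    |(∫ x in s, F x ∂μ) - ∫ x in s, G x ∂μ| ≤ ∫ x in s, B x ∂μ := by
  rw [← integral_sub hF hG]
  exact MeasureTheory.abs_integral_le_integral_abs.trans
    (setIntegral_mono_on (hF.sub hG).abs hB hs hFG)

theorem intervalIntegrable_rpow_of_pos {p a b : ℝ} (ha : 0 < a) (hab : a ≤ b) :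
    IntervalIntegrable (fun v : ℝ => v ^ p) volume a b :=
  intervalIntegral.intervalIntegrable_rpow
    (Or.inr fun h0 => (ha.trans_le (uIcc_of_le hab ▸ h0).1).false)

theorem integral_rpow_neg {p a b : ℝ} (hp : 1 < p) (ha : 0 < a) (hab : a ≤ b) :
    ∫ v in a..b, v ^ (-p) = (a ^ (-(p - 1)) - b ^ (-(p - 1))) / (p - 1) := by
  rw [integral_rpow (Or.inr ⟨by linarith, fun h0 => (ha.trans_le (uIcc_of_le hab ▸ h0).1).false⟩),
    show -p + 1 = -(p - 1) by ring, div_neg, ← neg_div, neg_sub]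

theorem integral_const_mul_rpow_neg_le {C p a b : ℝ} (hC : 0 ≤ C) (hp : 1 < p) (ha : 0 < a)
    (hab : a ≤ b) : ∫ v in a..b, C * v ^ (-p) ≤ C / ((p - 1) * a ^ (p - 1)) := by
  rw [intervalIntegral.integral_const_mul, integral_rpow_neg hp ha hab]
  have hb : 0 ≤ b ^ (-(p - 1)) := Real.rpow_nonneg (ha.le.trans hab) _
  calc C * ((a ^ (-(p - 1)) - b ^ (-(p - 1))) / (p - 1)) ≤ C * (a ^ (-(p - 1)) / (p - 1)) := by
        gcongr
        exact sub_le_self _ hb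
    _ = C / ((p - 1) * a ^ (p - 1)) := by rw [Real.rpow_neg ha.le]; field_simp

theorem integral_Ioi_rpow_neg {p a : ℝ} (hp : 1 < p) (ha : 0 < a) :
    ∫ v in Ioi a, v ^ (-p) = a ^ (-(p - 1)) / (p - 1) := by
  rw [integral_Ioi_rpow_of_lt (by linarith) ha, show -p + 1 = -(p - 1) by ring, div_neg, neg_div,
    neg_neg]

theorem continuousOn_rpow_const_Icc {a b : ℝ} (ha : 0 < a) (p : ℝ) :
    ContinuousOn (fun v : ℝ => v ^ p) (Icc a b) :=
  continuousOn_id.rpow_const fun _ hv => Or.inl (ha.trans_le hv.1).ne'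

theorem continuousOn_exp_neg_primitive {W : ℝ → ℝ} {a b : ℝ} (hab : a ≤ b)
    (hW : ContinuousOn W (Icc a b)) :
    ContinuousOn (fun t => Real.exp (-∫ v in a..t, W v)) (Icc a b) := by
  have hprim := intervalIntegral.continuousOn_primitive_interval
    (μ := volume) (hW.integrableOn_compact isCompact_Icc |>.mono_set (uIcc_of_le hab).subset)
  rw [uIcc_of_le hab] at hprim
  exact Real.continuous_exp.comp_continuousOn hprim.neg

theorem abs_exp_neg_integral_sub_le {W W' B : ℝ → ℝ} {a b : ℝ} (hab : a ≤ b)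
    (hW : IntervalIntegrable W volume a b) (hW' : IntervalIntegrable W' volume a b)
    (hB : IntervalIntegrable B volume a b) (hW0 : ∀ x ∈ Icc a b, 0 ≤ W x)
    (hW0' : ∀ x ∈ Icc a b, 0 ≤ W' x) (hWB : ∀ x ∈ Icc a b, |W x - W' x| ≤ B x) :
    |Real.exp (-∫ v in a..b, W v) - Real.exp (-∫ v in a..b, W' v)| ≤ ∫ v in a..b, B v :=
  (abs_exp_neg_sub_exp_neg_le (intervalIntegral.integral_nonneg hab hW0)
    (intervalIntegral.integral_nonneg hab hW0')).trans
    (abs_intervalIntegral_sub_le hab hW hW' hB hWB)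

theorem supOn_nonneg (S : Set ℝ) (f : ℝ → ℝ) : 0 ≤ supOn S f :=
  Real.iSup_nonneg fun _ => abs_nonneg _

theorem supOn_Icc_le_pairNorm (s0 r0 : ℝ) (f1 f2 g1 g2 : ℝ → ℝ) :
    supOn (Icc s0 r0) (f1 - g1) ≤ pairNorm s0 r0 f1 f2 g1 g2 :=
  le_max_left _ _

theorem supOn_Ici_le_pairNorm (s0 r0 : ℝ) (f1 f2 g1 g2 : ℝ → ℝ) :
    supOn (Ici r0) (f2 - g2) ≤ pairNorm s0 r0 f1 f2 g1 g2 :=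
  le_max_right _ _

theorem pairNorm_nonneg (s0 r0 : ℝ) (f1 f2 g1 g2 : ℝ → ℝ) : 0 ≤ pairNorm s0 r0 f1 f2 g1 g2 :=
  (supOn_nonneg _ _).trans (supOn_Icc_le_pairNorm _ _ _ _ _ _)

def E1integrand (c : Cst) (s0 r0 : ℝ) (L1 N1 K1 L2 N2 K2 : (ℝ → ℝ) → ℝ → ℝ) (f1 f2 : ℝ → ℝ)
    (v : ℝ) : ℝ :=
  2 * c.a * v * (N1 f1 v / L1 f1 v)
    + c.D1 / Hf c s0 r0 L1 N1 K1 L2 N2 K2 f1 f2 * (K1 f1 v / (L1 f1 v * v ^ c.nu))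

/-- Its integral over `[s0, ∞)` is `E1tilG c s0 h ht`. -/
def E1tilDensity (c : Cst) (h ht v : ℝ) : ℝ :=
  2 * c.a * c.Nt1 / c.L1m * v ^ (-(c.mu - 1))
    + 2 * c.a * c.N1M * c.Lt1 / c.L1m ^ 2 * v ^ (-(3 * c.mu - 1))
    + c.D1 * (c.Kt1 / h + c.K1M * ht / h ^ 2) / c.L1m * v ^ (-(2 * c.mu + c.nu))
    + c.D1 * c.K1M * c.Lt1 / (h * c.L1m ^ 2) * v ^ (-(3 * c.mu + c.nu))

theorem intervalIntegrable_E1tilDensity (c : Cst) (h ht : ℝ) {a b : ℝ} (ha : 0 < a)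
    (hab : a ≤ b) : IntervalIntegrable (E1tilDensity c h ht) volume a b := by
  have hpow : ∀ (C p : ℝ), IntervalIntegrable (fun v : ℝ => C * v ^ p) volume a b :=
    fun C p => (intervalIntegrable_rpow_of_pos ha hab).const_mul C
  exact (((hpow _ _).add (hpow _ _)).add (hpow _ _)).add (hpow _ _)

/-- With `e = Ẽ1`, its integral over `[s0, ∞)` is `Φ̃1`. -/
def Phi1tilDensity (c : Cst) (e v : ℝ) : ℝ :=
  e / c.L1m * v ^ (-(c.mu + c.nu)) + c.Lt1 / c.L1m ^ 2 * v ^ (-(2 * c.mu + c.nu))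

theorem intervalIntegrable_Phi1tilDensity (c : Cst) (e : ℝ) {a b : ℝ} (ha : 0 < a)
    (hab : a ≤ b) : IntervalIntegrable (Phi1tilDensity c e) volume a b :=
  ((intervalIntegrable_rpow_of_pos ha hab).const_mul _).add
    ((intervalIntegrable_rpow_of_pos ha hab).const_mul _)

section

variable {c : Cst} {s0 r0 : ℝ} {L1 N1 K1 L2 N2 K2 : (ℝ → ℝ) → ℝ → ℝ} {f1 f2 g1 g2 : ℝ → ℝ}

theorem PosC.s0_pos (hpos : PosC c s0 r0) : 0 < s0 := hpos.2.2.2.2.1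

theorem PosC.s0_lt_r0 (hpos : PosC c s0 r0) : s0 < r0 := hpos.2.2.2.2.2.1

theorem Hinf_pos (hpos : PosC c s0 r0) : 0 < Hinf c s0 r0 := by
  obtain ⟨-, hnu, -, hmu, hs0, hsr, -, -, -, -, -, -, -, -, -, hK1m, -⟩ := hpos
  have hrpow : r0 ^ (-(c.mu + c.nu - 1)) < s0 ^ (-(c.mu + c.nu - 1)) :=
    Real.rpow_lt_rpow_of_neg hs0 hsr (by linarith)
  exact mul_pos (div_pos hK1m (by linarith)) (sub_pos.mpr hrpow)

theorem Htil_nonneg (hpos : PosC c s0 r0) : 0 ≤ Htil c s0 r0 := by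
  obtain ⟨-, hnu, -, hmu, hs0, hsr, -, -, -, -, -, -, -, -, -, -, -, -, -, -, -, -, -,
    -, -, hKt1, -, -, hKt2⟩ := hpos
  have hr0 : 0 < r0 := hs0.trans hsr
  have : 0 < c.mu + c.nu - 1 := by linarith
  unfold Htil
  positivity

theorem L1_pos (hpos : PosC c s0 r0) (hA : Assum c s0 r0 L1 N1 K1 L2 N2 K2)
    (hf1 : f1 ∈ C1 s0 r0) {v : ℝ} (hv : v ∈ Icc s0 r0) : 0 < L1 f1 v := by
  obtain ⟨-, -, -, -, hs0, -, -, -, -, -, -, hL1m, -⟩ := hpos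
  exact (mul_pos hL1m (Real.rpow_pos_of_pos (hs0.trans_le hv.1) _)).trans_le
    (hA.2.2.1 f1 hf1 v hv).1

theorem K2_pos (hpos : PosC c s0 r0) (hA : Assum c s0 r0 L1 N1 K1 L2 N2 K2)
    (hf2 : f2 ∈ Mset r0) {v : ℝ} (hv : v ∈ Ici r0) : 0 < K2 f2 v := by
  obtain ⟨-, -, -, -, hs0, hsr, -, -, -, -, -, -, -, -, -, -, -, -, -, -, -, hK2m, -⟩ := hpos
  exact (mul_pos hK2m (Real.rpow_pos_of_pos (hs0.trans (hsr.trans_le hv)) _)).trans_le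
    (hA.2.2.2.1 f2 hf2 v hv).2.2.2.2.1

theorem continuousOn_K1_div_rpow (hs0 : 0 < s0) (hA : Assum c s0 r0 L1 N1 K1 L2 N2 K2)
    (hf1 : f1 ∈ C1 s0 r0) : ContinuousOn (fun v => K1 f1 v / v ^ c.nu) (Icc s0 r0) :=
  (hA.1 f1 hf1).2.2.div (continuousOn_rpow_const_Icc hs0 _)
    fun _ hv => (Real.rpow_pos_of_pos (hs0.trans_le hv.1) _).ne'

theorem integrableOn_K2_div_rpow (hpos : PosC c s0 r0) (hA : Assum c s0 r0 L1 N1 K1 L2 N2 K2)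
    (hf2 : f2 ∈ Mset r0) : IntegrableOn (fun v => K2 f2 v / v ^ c.nu) (Ioi r0) := by
  have ⟨_, hnu, _, hmu, hs0, hsr, _⟩ := hpos
  have hr0 : 0 < r0 := hs0.trans hsr
  have hcont : ContinuousOn (fun v => K2 f2 v / v ^ c.nu) (Ioi r0) :=
    ((hA.2.1 f2 hf2).2.2.mono Ioi_subset_Ici_self).div
      (continuousOn_id.rpow_const fun v hv => Or.inl (hr0.trans hv).ne')
      fun v hv => (Real.rpow_pos_of_pos (hr0.trans hv) _).ne'
  refine Integrable.mono' ((integrableOn_Ioi_rpow_of_lt (by linarith : -(c.mu + c.nu) < -1)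
    hr0).const_mul c.K2M) (hcont.aestronglyMeasurable measurableSet_Ioi)
    ((ae_restrict_iff' measurableSet_Ioi).mpr (Eventually.of_forall fun v hv => ?_))
  have hv0 : 0 < v := hr0.trans hv
  rw [Real.norm_eq_abs, abs_of_pos (div_pos (K2_pos hpos hA hf2 (Ioi_subset_Ici_self hv))
    (Real.rpow_pos_of_pos hv0 _)), neg_add', Real.rpow_sub hv0, ← mul_div_assoc]
  gcongr
  exact (hA.2.2.2.1 f2 hf2 v (Ioi_subset_Ici_self hv)).2.2.2.2.2

theorem Hinf_le_Hf (hpos : PosC c s0 r0) (hA : Assum c s0 r0 L1 N1 K1 L2 N2 K2)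
    (hf1 : f1 ∈ C1 s0 r0) (hf2 : f2 ∈ Mset r0) :
    Hinf c s0 r0 ≤ Hf c s0 r0 L1 N1 K1 L2 N2 K2 f1 f2 := by
  have ⟨_, hnu, _, hmu, hs0, hsr, _⟩ := hpos
  have hr0 : 0 < r0 := hs0.trans hsr
  have hK1 : ∫ v in s0..r0, c.K1m * v ^ (-(c.mu + c.nu)) ≤ ∫ v in s0..r0, K1 f1 v / v ^ c.nu := by
    refine intervalIntegral.integral_mono_on hsr.le
      ((intervalIntegrable_rpow_of_pos hs0 hsr.le).const_mul _)
      ((continuousOn_K1_div_rpow hs0 hA hf1).intervalIntegrable_of_Icc hsr.le) fun v hv => ?_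
    have hv0 : 0 < v := hs0.trans_le hv.1
    rw [neg_add', Real.rpow_sub hv0, ← mul_div_assoc]
    gcongr
    exact (hA.2.2.1 f1 hf1 v hv).2.2.2.2.1
  have hK2 : 0 ≤ ∫ v in Ioi r0, K2 f2 v / v ^ c.nu :=
    setIntegral_nonneg measurableSet_Ioi fun v hv =>
      (div_pos (K2_pos hpos hA hf2 (Ioi_subset_Ici_self hv))
        (Real.rpow_pos_of_pos (hr0.trans hv) _)).le
  calc Hinf c s0 r0 = ∫ v in s0..r0, c.K1m * v ^ (-(c.mu + c.nu)) := by
        rw [intervalIntegral.integral_const_mul, integral_rpow_neg (by linarith) hs0 hsr.le, Hinf]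
        ring
    _ ≤ Hf c s0 r0 L1 N1 K1 L2 N2 K2 f1 f2 := hK1.trans (le_add_of_nonneg_right hK2)

theorem abs_Hf_sub_Hf_le (hpos : PosC c s0 r0) (hA : Assum c s0 r0 L1 N1 K1 L2 N2 K2)
    (hf1 : f1 ∈ C1 s0 r0) (hf2 : f2 ∈ Mset r0) (hg1 : g1 ∈ C1 s0 r0) (hg2 : g2 ∈ Mset r0) :
    |Hf c s0 r0 L1 N1 K1 L2 N2 K2 f1 f2 - Hf c s0 r0 L1 N1 K1 L2 N2 K2 g1 g2|
      ≤ Htil c s0 r0 * pairNorm s0 r0 f1 f2 g1 g2 := by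
  have ⟨_, hnu, _, hmu, hs0, hsr, _, _, _, _, _, _, _, _, _, _, _, _, _, _, _, _, _,
    _, _, hKt1, _, _, hKt2⟩ := hpos
  have hr0 : 0 < r0 := hs0.trans hsr
  have hq : 1 < c.mu + c.nu := by linarith
  set P := pairNorm s0 r0 f1 f2 g1 g2
  have hP : 0 ≤ P := pairNorm_nonneg _ _ _ _ _ _
  have hdiv : ∀ {k k' C n v : ℝ}, 0 < v → 0 ≤ C → n ≤ P → |k - k'| ≤ C * v ^ (-c.mu) * n →
      |k / v ^ c.nu - k' / v ^ c.nu| ≤ C * P * v ^ (-(c.mu + c.nu)) :=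
    fun {k k' C n v} hv hC hn hk => by
      rw [div_sub_div_same, abs_div, abs_of_pos (Real.rpow_pos_of_pos hv _), neg_add',
        Real.rpow_sub hv, ← mul_div_assoc]
      gcongr
      exact hk.trans (by rw [mul_right_comm C P]; gcongr)
  have hIcc : |(∫ v in s0..r0, K1 f1 v / v ^ c.nu) - ∫ v in s0..r0, K1 g1 v / v ^ c.nu|
      ≤ c.Kt1 * P / ((c.mu + c.nu - 1) * s0 ^ (c.mu + c.nu - 1)) :=
    (abs_intervalIntegral_sub_le hsr.le
      ((continuousOn_K1_div_rpow hs0 hA hf1).intervalIntegrable_of_Icc hsr.le)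
      ((continuousOn_K1_div_rpow hs0 hA hg1).intervalIntegrable_of_Icc hsr.le)
      ((intervalIntegrable_rpow_of_pos hs0 hsr.le).const_mul (c.Kt1 * P))
      fun v hv => hdiv (hs0.trans_le hv.1) hKt1.le (supOn_Icc_le_pairNorm _ _ _ _ _ _)
        (hA.2.2.2.2.1 f1 hf1 g1 hg1 v hv).2.2).trans
      (integral_const_mul_rpow_neg_le (by positivity) hq hs0 hsr.le)
  have hIoi : |(∫ v in Ioi r0, K2 f2 v / v ^ c.nu) - ∫ v in Ioi r0, K2 g2 v / v ^ c.nu|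
      ≤ c.Kt2 * P * (r0 ^ (-(c.mu + c.nu - 1)) / (c.mu + c.nu - 1)) :=
    (abs_setIntegral_sub_le measurableSet_Ioi (integrableOn_K2_div_rpow hpos hA hf2)
      (integrableOn_K2_div_rpow hpos hA hg2)
      ((integrableOn_Ioi_rpow_of_lt (by linarith) hr0).const_mul (c.Kt2 * P))
      fun v hv => hdiv (hr0.trans hv) hKt2.le (supOn_Ici_le_pairNorm _ _ _ _ _ _)
        (hA.2.2.2.2.2 f2 hf2 g2 hg2 v (Ioi_subset_Ici_self hv)).2.2).trans
      (by rw [MeasureTheory.integral_const_mul, integral_Ioi_rpow_neg hq hr0])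
  calc _ ≤ |(∫ v in s0..r0, K1 f1 v / v ^ c.nu) - ∫ v in s0..r0, K1 g1 v / v ^ c.nu|
        + |(∫ v in Ioi r0, K2 f2 v / v ^ c.nu) - ∫ v in Ioi r0, K2 g2 v / v ^ c.nu| := by
        rw [Hf, Hf, add_sub_add_comm]
        exact abs_add_le _ _
    _ ≤ _ := add_le_add hIcc hIoi
    _ = Htil c s0 r0 * P := by
        rw [Htil, Real.rpow_neg hs0.le]
        field_simp

theorem E1f_eq_exp_neg_integral (η : ℝ) : E1f c s0 r0 L1 N1 K1 L2 N2 K2 f1 f2 η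
    = Real.exp (-∫ v in s0..η, E1integrand c s0 r0 L1 N1 K1 L2 N2 K2 f1 f2 v) := rfl

theorem continuousOn_E1integrand (hpos : PosC c s0 r0) (hA : Assum c s0 r0 L1 N1 K1 L2 N2 K2)
    (hf1 : f1 ∈ C1 s0 r0) :
    ContinuousOn (E1integrand c s0 r0 L1 N1 K1 L2 N2 K2 f1 f2) (Icc s0 r0) := by
  obtain ⟨hL, hN, hK⟩ := hA.1 f1 hf1
  exact ((continuousOn_const.mul continuousOn_id).mul
      (hN.div hL fun _ hv => (L1_pos hpos hA hf1 hv).ne')).add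
    (continuousOn_const.mul (hK.div (hL.mul (continuousOn_rpow_const_Icc hpos.s0_pos _)) fun v hv =>
      (mul_pos (L1_pos hpos hA hf1 hv) (Real.rpow_pos_of_pos (hpos.s0_pos.trans_le hv.1) _)).ne'))

theorem E1integrand_nonneg (hpos : PosC c s0 r0) (hA : Assum c s0 r0 L1 N1 K1 L2 N2 K2)
    (hf1 : f1 ∈ C1 s0 r0) (hf2 : f2 ∈ Mset r0) {v : ℝ} (hv : v ∈ Icc s0 r0) :
    0 ≤ E1integrand c s0 r0 L1 N1 K1 L2 N2 K2 f1 f2 v := by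
  have hH := (Hinf_pos hpos).trans_le (Hinf_le_Hf hpos hA hf1 hf2)
  have hL := L1_pos hpos hA hf1 hv
  obtain ⟨ha, -, -, -, hs0, -, hD1, -, -, -, -, -, -, hN1m, -, hK1m, -⟩ := hpos
  have hv0 : 0 < v := hs0.trans_le hv.1
  have hN : 0 < N1 f1 v :=
    (mul_pos hN1m (Real.rpow_pos_of_pos hv0 _)).trans_le (hA.2.2.1 f1 hf1 v hv).2.2.1
  have hK : 0 < K1 f1 v :=
    (mul_pos hK1m (Real.rpow_pos_of_pos hv0 _)).trans_le (hA.2.2.1 f1 hf1 v hv).2.2.2.2.1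
  unfold E1integrand
  positivity

theorem abs_E1integrand_sub_le (hpos : PosC c s0 r0) (hA : Assum c s0 r0 L1 N1 K1 L2 N2 K2)
    (hf1 : f1 ∈ C1 s0 r0) (hf2 : f2 ∈ Mset r0) (hg1 : g1 ∈ C1 s0 r0) (hg2 : g2 ∈ Mset r0)
    {v : ℝ} (hv : v ∈ Icc s0 r0) :
    |E1integrand c s0 r0 L1 N1 K1 L2 N2 K2 f1 f2 v - E1integrand c s0 r0 L1 N1 K1 L2 N2 K2 g1 g2 v|
      ≤ pairNorm s0 r0 f1 f2 g1 g2 * E1tilDensity c (Hinf c s0 r0) (Htil c s0 r0) v := by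
  set P := pairNorm s0 r0 f1 f2 g1 g2
  set Hf' := Hf c s0 r0 L1 N1 K1 L2 N2 K2 f1 f2
  set Hg' := Hf c s0 r0 L1 N1 K1 L2 N2 K2 g1 g2
  have hh : 0 < Hinf c s0 r0 := Hinf_pos hpos
  have hHf : Hinf c s0 r0 ≤ Hf' := Hinf_le_Hf hpos hA hf1 hf2
  have hHg : Hinf c s0 r0 ≤ Hg' := Hinf_le_Hf hpos hA hg1 hg2
  have hdH : |Hf' - Hg'| ≤ Htil c s0 r0 * P := abs_Hf_sub_Hf_le hpos hA hf1 hf2 hg1 hg2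
  have hn1 : supOn (Icc s0 r0) (f1 - g1) ≤ P := supOn_Icc_le_pairNorm _ _ _ _ _ _
  obtain ⟨ha, -, -, -, hs0, -, hD1, -, -, -, -, hL1m, -, hN1m, -, hK1m, -, -, -, -, -, -, -,
    hLt1, hNt1, hKt1, -⟩ := hpos
  have hv0 : 0 < v := hs0.trans_le hv.1
  have hX : 0 < v ^ c.mu := Real.rpow_pos_of_pos hv0 _
  have hY : 0 < v ^ c.nu := Real.rpow_pos_of_pos hv0 _
  obtain ⟨hLf, -⟩ := hA.2.2.1 f1 hf1 v hv
  obtain ⟨hLg, -, hNg, hNg', hKg, hKg'⟩ := hA.2.2.1 g1 hg1 v hv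
  obtain ⟨hdL, hdN, hdK⟩ := hA.2.2.2.2.1 f1 hf1 g1 hg1 v hv
  have hdL' : |L1 f1 v - L1 g1 v| ≤ c.Lt1 * P := hdL.trans (by gcongr)
  have hdN' : |N1 f1 v - N1 g1 v| ≤ c.Nt1 * P := hdN.trans (by gcongr)
  have hdK' : |K1 f1 v - K1 g1 v| ≤ c.Kt1 * v ^ (-c.mu) * P := hdK.trans (by gcongr)
  have hNg'' : |N1 g1 v| ≤ c.N1M * v ^ (-c.mu) :=
    (abs_of_pos ((mul_pos hN1m (Real.rpow_pos_of_pos hv0 _)).trans_le hNg)).trans_le hNg'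
  have hKg'' : |K1 g1 v| ≤ c.K1M * v ^ (-c.mu) :=
    (abs_of_pos ((mul_pos hK1m (Real.rpow_pos_of_pos hv0 _)).trans_le hKg)).trans_le hKg'
  have hNL := abs_div_sub_div_le_of_le (mul_pos hL1m hX) hLf hLg hdN' hdL' hNg''
  have hKHL := abs_div_mul_sub_div_mul_le_of_le hh hHf hHg (mul_pos hL1m hX) hLf hLg hdK' hdH
    hdL' hKg''
  have hsplit : E1integrand c s0 r0 L1 N1 K1 L2 N2 K2 f1 f2 v
      - E1integrand c s0 r0 L1 N1 K1 L2 N2 K2 g1 g2 v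
      = 2 * c.a * v * (N1 f1 v / L1 f1 v - N1 g1 v / L1 g1 v)
        + c.D1 * (K1 f1 v / (Hf' * L1 f1 v) - K1 g1 v / (Hg' * L1 g1 v)) / v ^ c.nu := by
    unfold E1integrand
    ring
  rw [hsplit]
  refine (abs_add_le _ _).trans ?_
  rw [abs_mul (2 * c.a * v), abs_div, abs_mul c.D1, abs_of_pos (by positivity : 0 < 2 * c.a * v),
    abs_of_pos hD1, abs_of_pos hY]
  refine (add_le_add (mul_le_mul_of_nonneg_left hNL (by positivity))
    (div_le_div_of_nonneg_right (mul_le_mul_of_nonneg_left hKHL hD1.le) hY.le)).trans_eq ?_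
  unfold E1tilDensity
  rw [show -(c.mu - 1) = 1 - ((1 : ℕ) : ℝ) * c.mu by push_cast; ring,
    show -(3 * c.mu - 1) = 1 - ((3 : ℕ) : ℝ) * c.mu by push_cast; ring,
    show -(2 * c.mu + c.nu) = -c.nu - ((2 : ℕ) : ℝ) * c.mu by push_cast; ring,
    show -(3 * c.mu + c.nu) = -c.nu - ((3 : ℕ) : ℝ) * c.mu by push_cast; ring,
    show -c.mu = 0 - ((1 : ℕ) : ℝ) * c.mu by push_cast; ring]
  simp only [rpow_sub_natCast_mul hv0, Real.rpow_one, Real.rpow_zero, Real.rpow_neg hv0.le]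
  field_simp
  ring

theorem integral_E1tilDensity_le (hpos : PosC c s0 r0) {t : ℝ} (hst : s0 ≤ t) :
    ∫ v in s0..t, E1tilDensity c (Hinf c s0 r0) (Htil c s0 r0) v ≤ E1til c s0 r0 := by
  have hh := Hinf_pos hpos
  have hht := Htil_nonneg hpos
  obtain ⟨ha, hnu, -, hmu, hs0, -, hD1, -, -, -, -, hL1m, -, -, hN1M, -, hK1M, -, -, -, -, -, -,
    hLt1, hNt1, hKt1, -⟩ := hpos
  have hpow : ∀ (C p : ℝ), IntervalIntegrable (fun v : ℝ => C * v ^ p) volume s0 t :=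
    fun C p => (intervalIntegrable_rpow_of_pos hs0 hst).const_mul C
  unfold E1tilDensity
  rw [intervalIntegral.integral_add (((hpow _ _).add (hpow _ _)).add (hpow _ _)) (hpow _ _),
    intervalIntegral.integral_add ((hpow _ _).add (hpow _ _)) (hpow _ _),
    intervalIntegral.integral_add (hpow _ _) (hpow _ _)]
  refine (add_le_add (add_le_add (add_le_add
    (integral_const_mul_rpow_neg_le (by positivity) (by linarith) hs0 hst)
    (integral_const_mul_rpow_neg_le (by positivity) (by linarith) hs0 hst))
    (integral_const_mul_rpow_neg_le (by positivity) (by linarith) hs0 hst))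
    (integral_const_mul_rpow_neg_le (by positivity) (by linarith) hs0 hst)).trans_eq ?_
  rw [E1til, E1tilG, show c.mu - 1 - 1 = c.mu - 2 by ring,
    show 3 * c.mu - 1 - 1 = 3 * c.mu - 2 by ring]
  have : c.mu - 2 ≠ 0 := by linarith
  have : 3 * c.mu - 2 ≠ 0 := by linarith
  have : 2 * c.mu + c.nu - 1 ≠ 0 := by linarith
  have : 3 * c.mu + c.nu - 1 ≠ 0 := by linarith
  field_simp
  ring

theorem continuousOn_E1f (hpos : PosC c s0 r0) (hA : Assum c s0 r0 L1 N1 K1 L2 N2 K2)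
    (hf1 : f1 ∈ C1 s0 r0) : ContinuousOn (E1f c s0 r0 L1 N1 K1 L2 N2 K2 f1 f2) (Icc s0 r0) :=
  continuousOn_exp_neg_primitive hpos.s0_lt_r0.le (continuousOn_E1integrand hpos hA hf1)

theorem abs_E1f_le_one (hpos : PosC c s0 r0) (hA : Assum c s0 r0 L1 N1 K1 L2 N2 K2)
    (hf1 : f1 ∈ C1 s0 r0) (hf2 : f2 ∈ Mset r0) {t : ℝ} (ht : t ∈ Icc s0 r0) :
    |E1f c s0 r0 L1 N1 K1 L2 N2 K2 f1 f2 t| ≤ 1 := by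
  rw [E1f_eq_exp_neg_integral, abs_of_pos (Real.exp_pos _), Real.exp_le_one_iff, neg_nonpos]
  exact intervalIntegral.integral_nonneg ht.1 fun v hv =>
    E1integrand_nonneg hpos hA hf1 hf2 ⟨hv.1, hv.2.trans ht.2⟩

theorem abs_E1f_sub_le (hpos : PosC c s0 r0) (hA : Assum c s0 r0 L1 N1 K1 L2 N2 K2)
    (hf1 : f1 ∈ C1 s0 r0) (hf2 : f2 ∈ Mset r0) (hg1 : g1 ∈ C1 s0 r0) (hg2 : g2 ∈ Mset r0)
    {t : ℝ} (ht : t ∈ Icc s0 r0) :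
    |E1f c s0 r0 L1 N1 K1 L2 N2 K2 f1 f2 t - E1f c s0 r0 L1 N1 K1 L2 N2 K2 g1 g2 t|
      ≤ pairNorm s0 r0 f1 f2 g1 g2 * E1til c s0 r0 := by
  have hsub : Icc s0 t ⊆ Icc s0 r0 := Icc_subset_Icc_right ht.2
  rw [E1f_eq_exp_neg_integral, E1f_eq_exp_neg_integral]
  refine (abs_exp_neg_integral_sub_le ht.1
    (((continuousOn_E1integrand hpos hA hf1).mono hsub).intervalIntegrable_of_Icc ht.1)
    (((continuousOn_E1integrand hpos hA hg1).mono hsub).intervalIntegrable_of_Icc ht.1)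
    ((intervalIntegrable_E1tilDensity c _ _ hpos.s0_pos ht.1).const_mul _)
    (fun v hv => E1integrand_nonneg hpos hA hf1 hf2 (hsub hv))
    (fun v hv => E1integrand_nonneg hpos hA hg1 hg2 (hsub hv))
    (fun v hv => abs_E1integrand_sub_le hpos hA hf1 hf2 hg1 hg2 (hsub hv))).trans ?_
  rw [intervalIntegral.integral_const_mul]
  exact mul_le_mul_of_nonneg_left (integral_E1tilDensity_le hpos ht.1) (pairNorm_nonneg _ _ _ _ _ _)

theorem continuousOn_Phi1_integrand (hpos : PosC c s0 r0) (hA : Assum c s0 r0 L1 N1 K1 L2 N2 K2)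
    (hf1 : f1 ∈ C1 s0 r0) :
    ContinuousOn (fun v => E1f c s0 r0 L1 N1 K1 L2 N2 K2 f1 f2 v / (L1 f1 v * v ^ c.nu))
      (Icc s0 r0) :=
  (continuousOn_E1f hpos hA hf1).div
    ((hA.1 f1 hf1).1.mul (continuousOn_rpow_const_Icc hpos.s0_pos _))
    fun _ hv =>
      (mul_pos (L1_pos hpos hA hf1 hv) (Real.rpow_pos_of_pos (hpos.s0_pos.trans_le hv.1) _)).ne'

theorem abs_Phi1_integrand_sub_le (hpos : PosC c s0 r0) (hA : Assum c s0 r0 L1 N1 K1 L2 N2 K2)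
    (hf1 : f1 ∈ C1 s0 r0) (hf2 : f2 ∈ Mset r0) (hg1 : g1 ∈ C1 s0 r0) (hg2 : g2 ∈ Mset r0)
    {v : ℝ} (hv : v ∈ Icc s0 r0) :
    |E1f c s0 r0 L1 N1 K1 L2 N2 K2 f1 f2 v / (L1 f1 v * v ^ c.nu)
        - E1f c s0 r0 L1 N1 K1 L2 N2 K2 g1 g2 v / (L1 g1 v * v ^ c.nu)|
      ≤ pairNorm s0 r0 f1 f2 g1 g2 * Phi1tilDensity c (E1til c s0 r0) v := by
  have ⟨_, _, _, _, hs0, _, _, _, _, _, _, hL1m, _, _, _, _, _, _, _, _, _, _, _, hLt1, _⟩ := hpos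
  have hv0 : 0 < v := hs0.trans_le hv.1
  have hX : 0 < v ^ c.mu := Real.rpow_pos_of_pos hv0 _
  have hY : 0 < v ^ c.nu := Real.rpow_pos_of_pos hv0 _
  have hdL : |L1 f1 v - L1 g1 v| ≤ c.Lt1 * pairNorm s0 r0 f1 f2 g1 g2 :=
    (hA.2.2.2.2.1 f1 hf1 g1 hg1 v hv).1.trans
      (mul_le_mul_of_nonneg_left (supOn_Icc_le_pairNorm _ _ _ _ _ _) hLt1.le)
  have hEL := abs_div_sub_div_le_of_le (mul_pos hL1m hX)
    (hA.2.2.1 f1 hf1 v hv).1 (hA.2.2.1 g1 hg1 v hv).1 (abs_E1f_sub_le hpos hA hf1 hf2 hg1 hg2 hv)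
    hdL (abs_E1f_le_one hpos hA hg1 hg2 hv)
  rw [← div_div, ← div_div, div_sub_div_same, abs_div, abs_of_pos hY]
  refine (div_le_div_of_nonneg_right hEL hY.le).trans_eq ?_
  unfold Phi1tilDensity
  rw [show -(c.mu + c.nu) = -c.nu - ((1 : ℕ) : ℝ) * c.mu by push_cast; ring,
    show -(2 * c.mu + c.nu) = -c.nu - ((2 : ℕ) : ℝ) * c.mu by push_cast; ring]
  simp only [rpow_sub_natCast_mul hv0, Real.rpow_neg hv0.le]
  field_simp

theorem integral_Phi1tilDensity_le (hpos : PosC c s0 r0) {t : ℝ} (hst : s0 ≤ t) :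
    ∫ v in s0..t, Phi1tilDensity c (E1til c s0 r0) v ≤ Phi1til c s0 r0 := by
  have hEt : 0 ≤ E1til c s0 r0 := by simpa using integral_E1tilDensity_le hpos le_rfl
  obtain ⟨-, hnu, -, hmu, hs0, -, -, -, -, -, -, hL1m, -, -, -, -, -, -, -, -, -, -, -, hLt1, -⟩ :=
    hpos
  unfold Phi1tilDensity
  rw [intervalIntegral.integral_add ((intervalIntegrable_rpow_of_pos hs0 hst).const_mul _)
    ((intervalIntegrable_rpow_of_pos hs0 hst).const_mul _)]
  refine (add_le_add (integral_const_mul_rpow_neg_le (by positivity) (by linarith) hs0 hst)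
    (integral_const_mul_rpow_neg_le (by positivity) (by linarith) hs0 hst)).trans_eq ?_
  have : c.mu + c.nu - 1 ≠ 0 := by linarith
  have : 2 * c.mu + c.nu - 1 ≠ 0 := by linarith
  rw [Phi1til, Phi1tilG, ← E1til]
  field_simp

end

theorem stmt5 (c : Cst) (s0 r0 : ℝ) (L1 N1 K1 L2 N2 K2 : (ℝ → ℝ) → ℝ → ℝ)
    (hpos : PosC c s0 r0) (hA : Assum c s0 r0 L1 N1 K1 L2 N2 K2)
    (f1 f2 : ℝ → ℝ) (hf1 : f1 ∈ C1 s0 r0) (hf2 : f2 ∈ Mset r0)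
    (g1 g2 : ℝ → ℝ) (hg1 : g1 ∈ C1 s0 r0) (hg2 : g2 ∈ Mset r0) :
    ∀ η ∈ Set.Icc s0 r0,
      |Phi1f c s0 r0 L1 N1 K1 L2 N2 K2 f1 f2 η - Phi1f c s0 r0 L1 N1 K1 L2 N2 K2 g1 g2 η| ≤ Phi1til c s0 r0 * pairNorm s0 r0 f1 f2 g1 g2 := by
  intro η hη
  have hsub : Icc s0 η ⊆ Icc s0 r0 := Icc_subset_Icc_right hη.2
  calc _ ≤ ∫ v in s0..η, pairNorm s0 r0 f1 f2 g1 g2 * Phi1tilDensity c (E1til c s0 r0) v :=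
        abs_intervalIntegral_sub_le hη.1
          ((continuousOn_Phi1_integrand hpos hA hf1).mono hsub |>.intervalIntegrable_of_Icc hη.1)
          ((continuousOn_Phi1_integrand hpos hA hg1).mono hsub |>.intervalIntegrable_of_Icc hη.1)
          ((intervalIntegrable_Phi1tilDensity c _ hpos.s0_pos hη.1).const_mul _)
          fun v hv => abs_Phi1_integrand_sub_le hpos hA hf1 hf2 hg1 hg2 (hsub hv)
    _ ≤ pairNorm s0 r0 f1 f2 g1 g2 * Phi1til c s0 r0 := by
        rw [intervalIntegral.integral_const_mul]
        exact mul_le_mul_of_nonneg_left (integral_Phi1tilDensity_le hpos hη.1)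
          (pairNorm_nonneg _ _ _ _ _ _)
    _ = Phi1til c s0 r0 * pairNorm s0 r0 f1 f2 g1 g2 := mul_comm _ _
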